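/- arXiv:2305.17532 — 2 statements merged into one kernel-verified Lean document; each statement's English description precedes it below -/
import Mathlib

section
/- Let (R, m) be a Noetherian local ring and let {I_n}, {J_n} be filtrations of ideals with J_n ⊆ I_n and λ_R(I_n/J_n) < ∞ for all n ≥ 1. Suppose {J_n} satisfies property A(c) for some c ∈ ℤ_{>0}. Then {I_n} also satisfies A(c). -/
/-- The saturation `I : J^∞ = ⋃ₖ (I : Jᵏ)`. -/
noncomputable def sat {A : Type*} [CommRing A] (I J : Ideal A) : Ideal A :=
  ⨆ n : ℕ, Submodule.colon I ((J ^ n : Ideal A) : Set A)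

/-- The quotient module `S/I` of two ideals (with `I ⊆ S` in the intended use). -/
noncomputable abbrev idealQuot {A : Type*} [CommRing A] (S I : Ideal A) :=
  S ⧸ (Submodule.comap S.subtype I)

/-- The length of a module, expressed as the Krull dimension of its submodule lattice. -/
noncomputable def mlength (R M : Type*) [CommRing R] [AddCommGroup M] [Module R M] : ℕ∞ :=
  WithBot.unbotD 0 (Order.krullDim (Submodule R M))

/-!
Since `λ(Iₙ/Jₙ) < ∞`, the chain `mᵏ(Iₙ/Jₙ)` stabilises and Nakayama makes it zero, so
`mᵏ Iₙ ⊆ Jₙ ⊆ Iₙ`. Saturating at `m`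
forgets such a factor, so `Iₙ : m^∞ = Jₙ : m^∞`, and then
`(Iₙ : m^∞) ∩ m^{cn} = (Jₙ : m^∞) ∩ m^{cn} = Jₙ ∩ m^{cn} ⊆ Iₙ ∩ m^{cn}`.
-/

section Saturation

variable {R : Type*} [CommRing R]

theorem le_sat (I K : Ideal R) : I ≤ sat I K :=
  Ideal.le_colon.trans (le_iSup (fun n => I.colon ((K ^ n : Ideal R) : Set R)) 0)

theorem sat_mono {I J : Ideal R} (K : Ideal R) (h : I ≤ J) : sat I K ≤ sat J K :=
  iSup_mono fun _ => Submodule.colon_mono h subset_rfl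

theorem sat_le_sat_of_pow_mul_le {I J K : Ideal R} {k : ℕ} (h : K ^ k * I ≤ J) :
    sat I K ≤ sat J K := by
  refine iSup_le fun j => le_trans ?_ (le_iSup (fun n => J.colon ((K ^ n : Ideal R) : Set R)) (k + j))
  intro r hr
  -- `r Kᵏ⁺ʲ = Kᵏ (r Kʲ) ⊆ Kᵏ I ⊆ J`, checked on products `a b` with `a ∈ Kᵏ`, `b ∈ Kʲ`
  have hmul : K ^ (k + j) ≤ J.colon {r} := by
    rw [pow_add, Submodule.mul_le]
    intro a ha b hb
    rw [Submodule.mem_colon_singleton, smul_eq_mul, mul_assoc, mul_comm b r]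
    exact h (Submodule.mul_mem_mul ha (Submodule.mem_colon.mp hr b hb))
  refine Submodule.mem_colon.mpr fun s hs => ?_
  rw [smul_eq_mul, mul_comm]
  exact Submodule.mem_colon_singleton.mp (hmul hs)

theorem sat_eq_of_pow_mul_le {I J K : Ideal R} (hJI : J ≤ I) {k : ℕ} (h : K ^ k * I ≤ J) :
    sat I K = sat J K :=
  (sat_le_sat_of_pow_mul_le h).antisymm (sat_mono K hJI)

theorem sat_inf_eq_of_pow_mul_le {I J K L : Ideal R} (hJI : J ≤ I) {k : ℕ} (h : K ^ k * I ≤ J)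
    (hJ : sat J K ⊓ L = J ⊓ L) : sat I K ⊓ L = I ⊓ L := by
  refine le_antisymm ?_ (inf_le_inf_right L (le_sat I K))
  calc sat I K ⊓ L = J ⊓ L := by rw [sat_eq_of_pow_mul_le hJI h, hJ]
    _ ≤ I ⊓ L := inf_le_inf_right L hJI

end Saturation

section FiniteLength

variable {R : Type*} [CommRing R]

theorem exists_pow_smul_top_eq_bot {M : Type*} [AddCommGroup M] [Module R M] [IsNoetherian R M]
    [IsArtinian R M] {K : Ideal R} (hK : K ≤ (⊥ : Ideal R).jacobson) :
    ∃ k, K ^ k • (⊤ : Submodule R M) = ⊥ := by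
  obtain ⟨k, hk⟩ := IsArtinian.monotone_stabilizes
    ⟨fun j => OrderDual.toDual (K ^ j • (⊤ : Submodule R M)),
      fun _ _ hab => Submodule.smul_mono_left (Ideal.pow_le_pow_right hab)⟩
  have hstab : K ^ k • (⊤ : Submodule R M) = K • K ^ k • (⊤ : Submodule R M) := by
    rw [← Submodule.smul_assoc, smul_eq_mul, ← pow_succ']
    exact congrArg OrderDual.ofDual (hk (k + 1) k.le_succ)
  exact ⟨k, Submodule.eq_bot_of_le_smul_of_le_jacobson_bot K _ (IsNoetherian.noetherian _)
    hstab.le hK⟩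

theorem mul_le_of_smul_top_eq_bot {I J K : Ideal R}
    (h : K • (⊤ : Submodule R (idealQuot I J)) = ⊥) : K * I ≤ J := by
  refine Submodule.mul_le.mpr fun r hr x hx => ?_
  have hz : r • (Submodule.Quotient.mk ⟨x, hx⟩ : idealQuot I J) ∈ K • (⊤ : Submodule R _) :=
    Submodule.smul_mem_smul hr Submodule.mem_top
  rw [h, Submodule.mem_bot, ← Submodule.Quotient.mk_smul, Submodule.Quotient.mk_eq_zero] at hz
  simpa using hz

theorem exists_pow_mul_le_of_isFiniteLength {I J K : Ideal R}
    (hK : K ≤ (⊥ : Ideal R).jacobson) (hfin : IsFiniteLength R (idealQuot I J)) :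
    ∃ k, K ^ k * I ≤ J := by
  obtain ⟨_, _⟩ := isFiniteLength_iff_isNoetherian_isArtinian.mp hfin
  obtain ⟨k, hk⟩ := exists_pow_smul_top_eq_bot (M := idealQuot I J) hK
  exact ⟨k, mul_le_of_smul_top_eq_bot hk⟩

end FiniteLength

theorem stmt5_general {R : Type*} [CommRing R] [IsLocalRing R]
    (I J : ℕ → Ideal R) (hI0 : I 0 = ⊤)
    (hJI : ∀ n, J n ≤ I n)
    (hfin : ∀ n, 1 ≤ n → IsFiniteLength R (idealQuot (I n) (J n)))
    (c : ℕ)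
    (hJA : ∀ n, sat (J n) (IsLocalRing.maximalIdeal R) ⊓ (IsLocalRing.maximalIdeal R) ^ (c * n)
      = J n ⊓ (IsLocalRing.maximalIdeal R) ^ (c * n)) :
    ∀ n, sat (I n) (IsLocalRing.maximalIdeal R) ⊓ (IsLocalRing.maximalIdeal R) ^ (c * n)
      = I n ⊓ (IsLocalRing.maximalIdeal R) ^ (c * n) := by
  intro n
  rcases Nat.eq_zero_or_pos n with rfl | hn
  · simp [hI0, eq_top_iff.mpr (le_sat ⊤ (IsLocalRing.maximalIdeal R))]
  · obtain ⟨k, hk⟩ := exists_pow_mul_le_of_isFiniteLength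
      (IsLocalRing.jacobson_eq_maximalIdeal ⊥ bot_ne_top).ge (hfin n hn)
    exact sat_inf_eq_of_pow_mul_le (hJI n) hk (hJA n)

/-- if `(R,m)` is Noetherian local, `{I_n}`, `{J_n}` are filtrations with
`J_n ⊆ I_n` and `λ_R(I_n/J_n) < ∞` for all `n ≥ 1`, and `{J_n}` satisfies `A(c)`,
then `{I_n}` also satisfies `A(c)`. -/
theorem stmt5 {R : Type*} [CommRing R] [IsNoetherianRing R] [IsLocalRing R]
    (I J : ℕ → Ideal R) (hI0 : I 0 = ⊤) (hJ0 : J 0 = ⊤)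
    (hIanti : ∀ m n, m ≤ n → I n ≤ I m) (hJanti : ∀ m n, m ≤ n → J n ≤ J m)
    (hImul : ∀ m n, I m * I n ≤ I (m + n)) (hJmul : ∀ m n, J m * J n ≤ J (m + n))
    (hJI : ∀ n, J n ≤ I n)
    (hfin : ∀ n, 1 ≤ n → IsFiniteLength R (idealQuot (I n) (J n)))
    (c : ℕ) (hc : 1 ≤ c)
    (hJA : ∀ n, sat (J n) (IsLocalRing.maximalIdeal R) ⊓ (IsLocalRing.maximalIdeal R) ^ (c * n)
      = J n ⊓ (IsLocalRing.maximalIdeal R) ^ (c * n)) :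
    ∀ n, sat (I n) (IsLocalRing.maximalIdeal R) ⊓ (IsLocalRing.maximalIdeal R) ^ (c * n)
      = I n ⊓ (IsLocalRing.maximalIdeal R) ^ (c * n) :=
  stmt5_general I J hI0 hJI hfin c hJA
end

section
/- Let R = k[x,y]_{(x,y)} and I_n = (x)^{⌈nπ⌉} ∩ (x,y)^{⌈2nπ⌉}. Then the saturation I_n : (x,y)^∞ equals (x)^{⌈nπ⌉}, and the length of (x)^{⌈nπ⌉}/I_n equals (⌈2nπ⌉ − ⌈nπ⌉)(⌈2nπ⌉ − ⌈nπ⌉ + 1)/2; consequently the limit of 2·λ_R((I_n : m^∞)/I_n)/n^2 as n → ∞ equals π². -/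
/-!
`x` is a prime element of `R` that does not divide `y ∈ m`, so `y^j` is a non-zerodivisor modulo
`(x)^a`, and hence `((x)^a ∩ m^b) : m^∞ = (x)^a`.  Multiplication by `x^a` identifies
`(x)^a / ((x)^a ∩ m^b)` with `R / (m^b : x^a) = R / m^(b-a)`, the colon being computed by comparing
degrees of monomials in `k[x,y]`.  As `R/m^c ≅ k[x,y]/(x,y)^c` and the residue field of `R` is `k`,
`λ_R(R/m^c)` is the number `c(c+1)/2` of monomials of degree `< c`.  Finally
`⌈2nπ⌉ - ⌈nπ⌉ = nπ + O(1)`.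
-/

set_option synthInstance.maxHeartbeats 1000000
set_option maxHeartbeats 2000000
open MvPolynomial

noncomputable abbrev mxy (k : Type*) [Field k] : Ideal (MvPolynomial (Fin 2) k) :=
  Ideal.span {X 0, X 1}

noncomputable abbrev Rxy (k : Type*) [Field k] [(mxy k).IsPrime] : Type _ :=
  Localization.AtPrime (mxy k)

noncomputable abbrev xx (k : Type*) [Field k] [(mxy k).IsPrime] : Rxy k :=
  algebraMap (MvPolynomial (Fin 2) k) (Rxy k) (X 0)

noncomputable abbrev yy (k : Type*) [Field k] [(mxy k).IsPrime] : Rxy k :=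
  algebraMap (MvPolynomial (Fin 2) k) (Rxy k) (X 1)

section Saturation
variable {A : Type*} [CommRing A] [IsDomain A]

theorem sat_span_pow_inf_pow {p q : A} {J : Ideal A} (hp : Prime p) (hpq : ¬ p ∣ q) (hq : q ∈ J)
    (a b : ℕ) : sat (Ideal.span {p} ^ a ⊓ J ^ b) J = Ideal.span {p} ^ a := by
  rw [Ideal.span_singleton_pow]
  refine le_antisymm (iSup_le fun j r hr => ?_) (le_iSup_of_le b fun r hr => ?_)
  · have hrq : r * q ^ j ∈ Ideal.span {p ^ a} :=
      (Submodule.mem_colon.1 hr _ (Ideal.pow_mem_pow hq j)).1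
    rw [Ideal.mem_span_singleton] at hrq ⊢
    exact hp.pow_dvd_of_dvd_mul_right a (fun h => hpq (hp.dvd_of_dvd_pow h)) hrq
  · exact Submodule.mem_colon.2 fun s hs => ⟨Ideal.mul_mem_right _ _ hr, Ideal.mul_mem_left _ _ hs⟩

end Saturation

section Length

theorem mlength_eq_length (R M : Type*) [CommRing R] [AddCommGroup M] [Module R M] :
    mlength R M = Module.length R M := by
  rw [mlength, ← Module.coe_length]
  rfl

theorem length_idealQuot_span_singleton_inf {A : Type*} [CommRing A] (g : A) (K : Ideal A) :
    Module.length A (idealQuot (Ideal.span {g}) (Ideal.span {g} ⊓ K))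
      = Module.length A (A ⧸ K.colon {g}) := by
  let f : A →ₗ[A] idealQuot (Ideal.span {g}) (Ideal.span {g} ⊓ K) :=
    Submodule.mkQ _ ∘ₗ LinearMap.toSpanSingleton A _ ⟨g, Ideal.mem_span_singleton_self g⟩
  have hf : Function.Surjective f := by
    rintro ⟨x, hx⟩
    obtain ⟨r, rfl⟩ := Ideal.mem_span_singleton'.1 hx
    exact ⟨r, rfl⟩
  have hker : LinearMap.ker f = K.colon {g} := by
    ext r
    rw [LinearMap.mem_ker, LinearMap.comp_apply, Submodule.mkQ_apply, Submodule.Quotient.mk_eq_zero,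
      Submodule.mem_colon_singleton, LinearMap.toSpanSingleton_apply, Submodule.mem_comap]
    exact and_iff_right (Ideal.mul_mem_left _ _ (Ideal.mem_span_singleton_self g))
  exact ((Submodule.quotEquivOfEq _ _ hker.symm).trans
    (f.quotKerEquivOfSurjective hf)).length_eq.symm

end Length

namespace Finsupp

theorem card_degree_lt (σ : Type*) [Fintype σ] [DecidableEq σ] (c : ℕ) :
    Nat.card {d : σ →₀ ℕ // d.degree < c}
      = ∑ n ∈ Finset.range c, (Fintype.card σ + n - 1).choose n := by
  have hdisj : Set.PairwiseDisjoint (Finset.range c : Set ℕ)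
      fun n => (Finset.univ : Finset σ).finsuppAntidiag n :=
    fun m _ n _ hmn => Finset.disjoint_left.2 fun d hm hn => hmn <| by
      rw [Finset.mem_finsuppAntidiag] at hm hn
      rw [← hm.1, ← hn.1]
  simp_rw [← Finset.card_univ (α := σ), ← Finset.card_finsuppAntidiag_nat_eq_choose,
    ← Finset.card_biUnion hdisj, ← Nat.card_eq_finsetCard]
  refine Nat.card_congr (Equiv.subtypeEquivRight fun d => ?_)
  simp [Finset.mem_finsuppAntidiag, degree_eq_sum]

theorem card_degree_lt_fin_two (c : ℕ) :
    Nat.card {d : Fin 2 →₀ ℕ // d.degree < c} = (c + 1).choose 2 := by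
  rw [card_degree_lt, Nat.choose_two_right, ← Finset.sum_range_id, Finset.sum_range_succ']
  simp [add_comm]

end Finsupp

namespace MvPolynomial

theorem mem_pow_idealOfVars_of_mul_X_pow_mem {σ R : Type*} [CommSemiring R] {p : MvPolynomial σ R}
    {i : σ} {a b : ℕ} (h : p * X i ^ a ∈ idealOfVars σ R ^ b) :
    p ∈ idealOfVars σ R ^ (b - a) := by
  rw [mem_pow_idealOfVars_iff'] at h ⊢
  intro d hd
  have := h (d + Finsupp.single i a) (by rw [map_add, Finsupp.degree_single]; omega)
  rwa [X_pow_eq_monomial, coeff_mul_monomial, mul_one] at this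

variable (σ k : Type*) [Field k]

theorem idealOfVars_isMaximal : (idealOfVars σ k).IsMaximal := by
  have : idealOfVars σ k = RingHom.ker (constantCoeff (σ := σ) (R := k)) := by
    ext p
    rw [← pow_one (idealOfVars σ k), mem_pow_idealOfVars_iff', RingHom.mem_ker, constantCoeff_eq]
    refine ⟨fun h => h 0 (by simp), fun h d hd => ?_⟩
    rw [Nat.lt_one_iff, Finsupp.degree_eq_zero_iff] at hd
    rwa [hd]
  rw [this]
  exact RingHom.ker_isMaximal_of_surjective _ fun a => ⟨C a, constantCoeff_C _ _⟩

/-- The monomials of degree `< c` span a complement of `(X_i)^c`. -/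
noncomputable def quotientPowIdealOfVarsEquiv (c : ℕ) :
    (MvPolynomial σ k ⧸ idealOfVars σ k ^ c) ≃ₗ[k] restrictSupport k {d : σ →₀ ℕ | d.degree < c} := by
  set s : Set (σ →₀ ℕ) := Finsupp.degree ⁻¹' Set.Ici c
  have hI : (idealOfVars σ k ^ c).restrictScalars k = restrictSupport k s := by
    rw [pow_idealOfVars, restrictScalars_restrictSupportIdeal]
  have hcompl : IsCompl (restrictSupport k s) (restrictSupport k sᶜ) := by
    refine ⟨Submodule.disjoint_def.2 fun p hs hsc => ?_, codisjoint_iff.2 ?_⟩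
    · rw [mem_restrictSupport_iff] at hs hsc
      exact support_eq_empty.1 (Finset.coe_eq_empty.1 (Set.subset_empty_iff.1
        fun d hd => hsc hd (hs hd)))
    · rw [restrictSupport_eq_span, restrictSupport_eq_span, ← Submodule.span_union,
        ← Set.image_union, Set.union_compl_self, ← restrictSupport_eq_span, restrictSupport_univ]
  have hsc : sᶜ = {d | d.degree < c} := by ext; simp [s]
  exact (Submodule.Quotient.restrictScalarsEquiv k _).symm ≪≫ₗ
    Submodule.quotEquivOfEq _ _ hI ≪≫ₗ (restrictSupport k s).quotientEquivOfIsCompl _ hcompl ≪≫ₗ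
    LinearEquiv.ofEq _ _ (by rw [hsc])

instance [Finite σ] (c : ℕ) : Module.Finite k (MvPolynomial σ k ⧸ idealOfVars σ k ^ c) :=
  have : Finite {d : σ →₀ ℕ | d.degree < c} := (Finsupp.finite_of_degree_lt c).to_subtype
  have := Module.Finite.of_basis (basisRestrictSupport k {d : σ →₀ ℕ | d.degree < c})
  Module.Finite.equiv (quotientPowIdealOfVarsEquiv σ k c).symm

theorem finrank_quotient_pow_idealOfVars (c : ℕ) :
    Module.finrank k (MvPolynomial σ k ⧸ idealOfVars σ k ^ c)
      = Nat.card {d : σ →₀ ℕ // d.degree < c} := by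
  rw [(quotientPowIdealOfVarsEquiv σ k c).finrank_eq,
    Module.finrank_eq_nat_card_basis (basisRestrictSupport k _)]
  rfl

end MvPolynomial

section LocalRing
open IsLocalRing
variable (k : Type*) [Field k]

theorem mxy_eq_idealOfVars : mxy k = idealOfVars (Fin 2) k := by
  rw [mxy, idealOfVars]
  congr 1
  ext p
  simp [Fin.exists_fin_two, eq_comm]

instance mxy_isMaximal : (mxy k).IsMaximal := by
  rw [mxy_eq_idealOfVars]
  exact idealOfVars_isMaximal _ _

theorem span_X_zero_isPrime : (Ideal.span {X 0} : Ideal (MvPolynomial (Fin 2) k)).IsPrime :=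
  (Ideal.span_singleton_prime (X_ne_zero 0)).2 X_prime

variable [(mxy k).IsPrime]

theorem span_xx_eq_map :
    Ideal.span {xx k} = (Ideal.span {(X 0 : MvPolynomial (Fin 2) k)}).map (algebraMap _ (Rxy k)) := by
  rw [Ideal.map_span, Set.image_singleton]

theorem disjoint_primeCompl_span_X_zero :
    Disjoint ((mxy k).primeCompl : Set (MvPolynomial (Fin 2) k))
      (Ideal.span {(X 0 : MvPolynomial (Fin 2) k)}) :=
  Set.disjoint_left.2 fun _ hs hx =>
    hs ((Ideal.span_singleton_le_iff_mem _).2 (Ideal.subset_span (by simp)) hx)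

theorem xx_prime : Prime (xx k) := by
  have hne : xx k ≠ 0 := (map_ne_zero_iff _ (IsLocalization.injective (Rxy k)
    (Ideal.primeCompl_le_nonZeroDivisors (mxy k)))).2 (X_ne_zero 0)
  rw [← Ideal.span_singleton_prime hne, span_xx_eq_map]
  exact IsLocalization.isPrime_of_isPrime_disjoint _ _ _ (span_X_zero_isPrime k)
    (disjoint_primeCompl_span_X_zero k)

theorem not_xx_dvd_yy : ¬ xx k ∣ yy k := by
  rw [← Ideal.mem_span_singleton, span_xx_eq_map, ← Ideal.mem_under,
    IsLocalization.under_map_of_isPrime_disjoint _ _ (span_X_zero_isPrime k)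
      (disjoint_primeCompl_span_X_zero k), Ideal.mem_span_singleton, X_dvd_X]
  decide

theorem xx_mem_maximalIdeal : xx k ∈ maximalIdeal (Rxy k) := by
  rw [← Localization.AtPrime.map_eq_maximalIdeal]
  exact Ideal.mem_map_of_mem _ (Ideal.subset_span (by simp))

theorem yy_mem_maximalIdeal : yy k ∈ maximalIdeal (Rxy k) := by
  rw [← Localization.AtPrime.map_eq_maximalIdeal]
  exact Ideal.mem_map_of_mem _ (Ideal.subset_span (by simp))

theorem maximalIdeal_pow_colon_xx_pow {a b : ℕ} (hab : a ≤ b) :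
    (maximalIdeal (Rxy k) ^ b).colon {xx k ^ a} = maximalIdeal (Rxy k) ^ (b - a) := by
  ext r
  rw [Submodule.mem_colon_singleton, smul_eq_mul]
  constructor
  · intro h
    obtain ⟨p, s, rfl⟩ := IsLocalization.exists_mk'_eq (mxy k).primeCompl r
    have hunder := IsLocalization.AtPrime.under_maximalIdeal_pow (mxy k) (Rxy k)
    rw [IsLocalization.mk'_mem_iff, ← Ideal.mem_under, hunder, mxy_eq_idealOfVars]
    refine mem_pow_idealOfVars_of_mul_X_pow_mem (i := 0) (a := a) ?_
    rw [← mxy_eq_idealOfVars, ← hunder, Ideal.mem_under, map_mul, map_pow,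
      ← IsLocalization.mk'_spec (Rxy k) p s, mul_right_comm]
    exact Ideal.mul_mem_right _ _ h
  · intro h
    rw [← Nat.sub_add_cancel hab, pow_add]
    exact Ideal.mul_mem_mul h (Ideal.pow_mem_pow (xx_mem_maximalIdeal k) a)

noncomputable def quotientPowIdealOfVarsAlgEquiv (c : ℕ) :
    (MvPolynomial (Fin 2) k ⧸ idealOfVars (Fin 2) k ^ c) ≃ₐ[k] Rxy k ⧸ maximalIdeal (Rxy k) ^ c :=
  (Ideal.quotientEquivAlgOfEq k (by rw [mxy_eq_idealOfVars])).trans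
    ((IsLocalization.AtPrime.equivQuotMaximalIdealPow (mxy k) (Rxy k) c).restrictScalars k)

instance (c : ℕ) : Module.Finite k (Rxy k ⧸ maximalIdeal (Rxy k) ^ c) :=
  Module.Finite.equiv (quotientPowIdealOfVarsAlgEquiv k c).toLinearEquiv

theorem finrank_quotient_maximalIdeal_pow (c : ℕ) :
    Module.finrank k (Rxy k ⧸ maximalIdeal (Rxy k) ^ c) = (c + 1).choose 2 := by
  rw [← (quotientPowIdealOfVarsAlgEquiv k c).toLinearEquiv.finrank_eq,
    finrank_quotient_pow_idealOfVars, Finsupp.card_degree_lt_fin_two]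

theorem length_residueField :
    Module.length (ResidueField k) (ResidueField (Rxy k)) = 1 := by
  let e : (Rxy k ⧸ maximalIdeal (Rxy k) ^ 1) ≃ₗ[k] ResidueField (Rxy k) :=
    (Ideal.quotientEquivAlgOfEq k (pow_one _)).toLinearEquiv
  have : Module.Finite k (ResidueField (Rxy k)) := Module.Finite.equiv e
  rw [← Module.length_eq_of_surjective (residue_surjective (R := k)), Module.length_eq_finrank,
    ← e.finrank_eq, finrank_quotient_maximalIdeal_pow]
  rfl

theorem length_quotient_maximalIdeal_pow (c : ℕ) :
    Module.length (Rxy k) (Rxy k ⧸ maximalIdeal (Rxy k) ^ c) = (c + 1).choose 2 := by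
  have := IsLocalRing.length_restrictScalars k (Rxy k) (Rxy k ⧸ maximalIdeal (Rxy k) ^ c)
  rw [length_residueField, mul_one] at this
  rw [← this, Module.length_eq_finrank, finrank_quotient_maximalIdeal_pow]

end LocalRing

section Asymptotics
open Filter Topology

theorem ceil_mul_le_ceil_two_mul {α : ℝ} (hα : 0 ≤ α) (n : ℕ) :
    ⌈(n : ℝ) * α⌉₊ ≤ ⌈(2 * n : ℝ) * α⌉₊ :=
  Nat.ceil_mono (by nlinarith [(n.cast_nonneg : (0 : ℝ) ≤ n)])

theorem tendsto_ceil_two_mul_sub_ceil_div {α : ℝ} (hα : 0 ≤ α) :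
    Tendsto (fun n : ℕ => ((⌈(2 * n : ℝ) * α⌉₊ - ⌈(n : ℝ) * α⌉₊ : ℕ) : ℝ) / n) atTop (𝓝 α) := by
  have hceil {a : ℝ} (ha : 0 ≤ a) : Tendsto (fun n : ℕ => (⌈a * n⌉₊ : ℝ) / n) atTop (𝓝 a) :=
    (tendsto_nat_ceil_mul_div_atTop ha).comp tendsto_natCast_atTop_atTop
  have := (hceil (by positivity : 0 ≤ 2 * α)).sub (hceil hα)
  rw [two_mul, add_sub_cancel_right] at this
  refine this.congr fun n => ?_
  rw [Nat.cast_sub (ceil_mul_le_ceil_two_mul hα n), sub_div]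
  ring_nf

theorem tendsto_two_mul_choose_two_div_sq {c : ℕ → ℕ} {L : ℝ}
    (h : Tendsto (fun n => (c n : ℝ) / n) atTop (𝓝 L)) :
    Tendsto (fun n : ℕ => 2 * ((c n + 1).choose 2 : ℝ) / n ^ 2) atTop (𝓝 (L ^ 2)) := by
  have := h.mul (h.add tendsto_one_div_atTop_nhds_zero_nat)
  rw [add_zero, ← sq] at this
  refine this.congr' (eventually_ne_atTop 0 |>.mono fun n hn => ?_)
  dsimp only
  rw [Nat.cast_choose_two, Nat.cast_add_one]
  field_simp
  ring

end Asymptotics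

open Filter in
/-- in `R = k[x,y]_{(x,y)}` with `m = (x,y)`, for
`I_n = (x)^{⌈nπ⌉} ∩ m^{⌈2nπ⌉}`, the saturation `I_n : m^∞` equals `(x)^{⌈nπ⌉}`, the
length of `(x)^{⌈nπ⌉}/I_n` equals `(⌈2nπ⌉−⌈nπ⌉)(⌈2nπ⌉−⌈nπ⌉+1)/2`, and
`2·λ_R((I_n : m^∞)/I_n)/n² → π²`. -/
theorem stmt7 (k : Type*) [Field k] [(mxy k).IsPrime]
    (I : ℕ → Ideal (Rxy k))
    (hI : ∀ n, I n = Ideal.span {xx k} ^ (⌈(n : ℝ) * Real.pi⌉₊)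
        ⊓ (IsLocalRing.maximalIdeal (Rxy k)) ^ (⌈(2 * n : ℝ) * Real.pi⌉₊)) :
    (∀ n, 1 ≤ n →
      sat (I n) (IsLocalRing.maximalIdeal (Rxy k))
        = Ideal.span {xx k} ^ (⌈(n : ℝ) * Real.pi⌉₊)) ∧
    (∀ n, 1 ≤ n →
      mlength (Rxy k) (idealQuot (sat (I n) (IsLocalRing.maximalIdeal (Rxy k))) (I n))
        = (((⌈(2 * n : ℝ) * Real.pi⌉₊ - ⌈(n : ℝ) * Real.pi⌉₊)
            * (⌈(2 * n : ℝ) * Real.pi⌉₊ - ⌈(n : ℝ) * Real.pi⌉₊ + 1) / 2 : ℕ) : ℕ∞)) ∧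
    Tendsto (fun n : ℕ =>
        (2 * ((mlength (Rxy k)
          (idealQuot (sat (I n) (IsLocalRing.maximalIdeal (Rxy k))) (I n))).toNat : ℝ)) / n ^ 2)
      atTop (nhds (Real.pi ^ 2)) := by
  have hsat n : sat (I n) (IsLocalRing.maximalIdeal (Rxy k))
      = Ideal.span {xx k} ^ (⌈(n : ℝ) * Real.pi⌉₊) := by
    rw [hI]
    exact sat_span_pow_inf_pow (xx_prime k) (not_xx_dvd_yy k) (yy_mem_maximalIdeal k) _ _
  have hlength n :
      mlength (Rxy k) (idealQuot (sat (I n) (IsLocalRing.maximalIdeal (Rxy k))) (I n))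
        = ((⌈(2 * n : ℝ) * Real.pi⌉₊ - ⌈(n : ℝ) * Real.pi⌉₊ + 1).choose 2 : ℕ) := by
    rw [hsat, hI, mlength_eq_length, Ideal.span_singleton_pow, length_idealQuot_span_singleton_inf,
      maximalIdeal_pow_colon_xx_pow k (ceil_mul_le_ceil_two_mul Real.pi_pos.le n),
      length_quotient_maximalIdeal_pow]
  refine ⟨fun n _ => hsat n, fun n _ => ?_, ?_⟩
  · rw [hlength, Nat.choose_two_right, Nat.add_sub_cancel, mul_comm]
  · simp_rw [hlength, ENat.toNat_natCast]
    exact tendsto_two_mul_choose_two_div_sq (tendsto_ceil_two_mul_sub_ceil_div Real.pi_pos.le)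
end
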